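/- arXiv:1205.4095 — 2 statements merged into one kernel-verified Lean document; each statement's English description precedes it below -/
import Mathlib

section
/- Let f, s : [0,1]^d → ℝ be square-integrable and let 𝒩 = (Ω_k)_{k=1}^K be any finite measurable partition of [0,1]^d with weights w_k = Leb(Ω_k) and stratum standard deviations σ_k given by σ_k² = (1/w_k)∫_{Ω_k}(f − (1/w_k)∫_{Ω_k} f)² + (1/w_k)∫_{Ω_k} s². Then ∑_k w_k σ_k ≥ ∫_{[0,1]^d} s(x) dx. -/
open MeasureTheory Finset

/-- For any finite measurable partition of `[0,1]^d` into strata `Ω_k` with weights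
`w_k = Leb(Ω_k)` and stratum standard deviations `σ_k`, one has `∑ w_k σ_k ≥ ∫ s`. -/
theorem stmt3 (d K : ℕ) (f s : EuclideanSpace ℝ (Fin d) → ℝ)
    (hfm : Measurable f) (hsm : Measurable s)
    (hf2 : IntegrableOn (fun x => (f x) ^ 2) {x | ∀ i, x i ∈ Set.Icc (0 : ℝ) 1})
    (hs2 : IntegrableOn (fun x => (s x) ^ 2) {x | ∀ i, x i ∈ Set.Icc (0 : ℝ) 1})
    (Ω : Fin K → Set (EuclideanSpace ℝ (Fin d)))
    (hmeas : ∀ k, MeasurableSet (Ω k))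
    (hdisj : Pairwise (Function.onFun Disjoint Ω))
    (hcover : (⋃ k, Ω k) = {x | ∀ i, x i ∈ Set.Icc (0 : ℝ) 1})
    (w : Fin K → ℝ) (hw : ∀ k, w k = (volume (Ω k)).toReal)
    (σ : Fin K → ℝ)
    (hσ : ∀ k, σ k = Real.sqrt
      ((1 / w k) * (∫ x in Ω k, (f x - (1 / w k) * ∫ u in Ω k, f u) ^ 2)
        + (1 / w k) * ∫ x in Ω k, (s x) ^ 2)) :
    (∫ x in {x : EuclideanSpace ℝ (Fin d) | ∀ i, x i ∈ Set.Icc (0 : ℝ) 1}, s x)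
      ≤ ∑ k, w k * σ k := by
  set C : Set (EuclideanSpace ℝ (Fin d)) := {x | ∀ i, x i ∈ Set.Icc (0 : ℝ) 1} with hC
  -- volume of the cube is 1
  have hCvol : volume C = 1 := by
    have hpre : C = (MeasurableEquiv.toLp 2 (Fin d → ℝ)).symm ⁻¹'
        (Set.univ.pi fun _ : Fin d => Set.Icc (0 : ℝ) 1) := by
      ext x
      simp only [Set.mem_preimage, Set.mem_univ_pi, hC, Set.mem_setOf_eq]
      rfl
    rw [hpre, (EuclideanSpace.volume_preserving_symm_measurableEquiv_toLp (Fin d)).measure_preimage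
      ((MeasurableSet.univ_pi fun _ => measurableSet_Icc).nullMeasurableSet)]
    rw [volume_pi_pi]
    simp [Real.volume_Icc]
  have hΩsub : ∀ k, Ω k ⊆ C := fun k => hcover ▸ Set.subset_iUnion Ω k
  have hΩfin : ∀ k, volume (Ω k) < ⊤ := fun k =>
    lt_of_le_of_lt (measure_mono (hΩsub k)) (by rw [hCvol]; exact ENNReal.one_lt_top)
  have hwnn : ∀ k, 0 ≤ w k := fun k => (hw k) ▸ ENNReal.toReal_nonneg
  have hσnn : ∀ k, 0 ≤ σ k := fun k => (hσ k) ▸ Real.sqrt_nonneg _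
  -- integrability of s on each stratum
  have hintk : ∀ k, IntegrableOn s (Ω k) := by
    intro k
    haveI : IsFiniteMeasure (volume.restrict (Ω k)) :=
      ⟨by rw [Measure.restrict_apply_univ]; exact hΩfin k⟩
    have hmem2 : MemLp s 2 (volume.restrict (Ω k)) :=
      (memLp_two_iff_integrable_sq hsm.aestronglyMeasurable).mpr
        ((hs2.mono_set (hΩsub k)))
    exact (hmem2.mono_exponent (p := 1) (by norm_num)).integrable le_rfl
  have hintC : IntegrableOn s C := by
    haveI : IsFiniteMeasure (volume.restrict C) :=
      ⟨by rw [Measure.restrict_apply_univ, hCvol]; exact ENNReal.one_lt_top⟩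
    have hmem2 : MemLp s 2 (volume.restrict C) :=
      (memLp_two_iff_integrable_sq hsm.aestronglyMeasurable).mpr hs2
    exact (hmem2.mono_exponent (p := 1) (by norm_num)).integrable le_rfl
  -- split the integral over the partition
  have hsplit : (∫ x in C, s x) = ∑ k, ∫ x in Ω k, s x := by
    rw [← hcover, integral_iUnion hmeas hdisj (hcover ▸ hintC), tsum_fintype]
  rw [hsplit]
  apply Finset.sum_le_sum
  intro k _
  -- per-stratum inequality
  rcases eq_or_lt_of_le (hwnn k) with h0 | hpos
  · -- w k = 0 : the stratum is null
    have hvol0 : volume (Ω k) = 0 := by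
      have := hw k
      rw [← h0] at this
      exact (ENNReal.toReal_eq_zero_iff _).mp this.symm |>.resolve_right (hΩfin k).ne
    rw [Measure.restrict_eq_zero.mpr hvol0, integral_zero_measure, ← h0, zero_mul]
  · -- w k > 0
    haveI : IsFiniteMeasure (volume.restrict (Ω k)) :=
      ⟨by rw [Measure.restrict_apply_univ]; exact hΩfin k⟩
    have hmem2 : MemLp s 2 (volume.restrict (Ω k)) :=
      (memLp_two_iff_integrable_sq hsm.aestronglyMeasurable).mpr
        ((hs2.mono_set (hΩsub k)))
    set I : ℝ := ∫ x in Ω k, (s x) ^ 2 with hI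
    have hInn : 0 ≤ I := integral_nonneg fun x => sq_nonneg _
    -- Cauchy–Schwarz: ∫ s ≤ sqrt I * sqrt (w k)
    have hCS : (∫ x in Ω k, s x) ≤ Real.sqrt I * Real.sqrt (w k) := by
      have h1 : (∫ x in Ω k, s x) ≤ ∫ x in Ω k, |s x| * (1 : ℝ) := by
        simp only [mul_one]
        exact integral_mono (hintk k) (hintk k).abs (fun x => le_abs_self _)
      have hpq : (2 : ℝ).HolderConjugate 2 := by
        constructor <;> norm_num
      have habs2 : MemLp (fun x => |s x|) (ENNReal.ofReal 2) (volume.restrict (Ω k)) := by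
        rw [show ENNReal.ofReal 2 = 2 by norm_num]
        exact hmem2.abs
      have hone : MemLp (fun _ => (1 : ℝ)) (ENNReal.ofReal 2) (volume.restrict (Ω k)) :=
        memLp_const 1
      have h2 := integral_mul_le_Lp_mul_Lq_of_nonneg hpq
        (Filter.Eventually.of_forall fun x => abs_nonneg (s x))
        (Filter.Eventually.of_forall fun _ => zero_le_one) habs2 hone
      have e1 : (∫ x in Ω k, |s x| ^ (2 : ℝ)) = I := by
        rw [hI]
        refine integral_congr_ae (Filter.Eventually.of_forall fun x => ?_)
        show |s x| ^ (2:ℝ) = s x ^ 2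
        rw [show (2:ℝ) = ((2:ℕ):ℝ) by norm_num, Real.rpow_natCast, sq_abs]
      have e2 : (∫ _x in Ω k, (1 : ℝ) ^ (2 : ℝ)) = w k := by
        simp only [Real.one_rpow, integral_const, smul_eq_mul, mul_one]
        rw [hw k, measureReal_restrict_apply_univ, measureReal_def]
      rw [e1, e2] at h2
      calc (∫ x in Ω k, s x) ≤ ∫ x in Ω k, |s x| * (1 : ℝ) := h1
        _ ≤ I ^ (1/2 : ℝ) * w k ^ (1/2 : ℝ) := h2
        _ = Real.sqrt I * Real.sqrt (w k) := by
            rw [Real.sqrt_eq_rpow, Real.sqrt_eq_rpow]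
    -- sqrt I * sqrt (w k) ≤ w k * σ k
    have hσlb : Real.sqrt ((1 / w k) * I) ≤ σ k := by
      rw [hσ k]
      apply Real.sqrt_le_sqrt
      have : 0 ≤ (1 / w k) * (∫ x in Ω k, (f x - (1 / w k) * ∫ u in Ω k, f u) ^ 2) :=
        mul_nonneg (by positivity) (integral_nonneg fun x => sq_nonneg _)
      linarith
    have hkey : Real.sqrt I * Real.sqrt (w k) ≤ w k * σ k := by
      have h3 : Real.sqrt ((1 / w k) * I) = Real.sqrt I / Real.sqrt (w k) := by
        rw [Real.sqrt_mul (by positivity), one_div, Real.sqrt_inv]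
        ring
      have h4 : Real.sqrt I / Real.sqrt (w k) ≤ σ k := h3 ▸ hσlb
      have hsw : 0 < Real.sqrt (w k) := Real.sqrt_pos.mpr hpos
      have h5 : Real.sqrt I ≤ σ k * Real.sqrt (w k) := by
        rwa [div_le_iff₀ hsw] at h4
      calc Real.sqrt I * Real.sqrt (w k) ≤ (σ k * Real.sqrt (w k)) * Real.sqrt (w k) :=
            mul_le_mul_of_nonneg_right h5 hsw.le
        _ = σ k * (Real.sqrt (w k) * Real.sqrt (w k)) := by ring
        _ = σ k * w k := by rw [Real.mul_self_sqrt (hwnn k)]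
        _ = w k * σ k := mul_comm _ _
    exact hCS.trans hkey
end

section
/- For A, B > 0 with A + B = S, n > 0, and allocations T_A = n·A/S + Δ, T_B = n·B/S − Δ with 0 < Δ ≤ n·B/(2S), we have A²/T_A + B²/T_B − S²/n ≥ (S²/n)·(S·Δ/(An))·(S·Δ/(Bn)) / ((1 + SΔ/(An))(1 − SΔ/(Bn))) ≥ S⁴Δ²/(4ABn³) · (1/(1 + SΔ/(An))). -/
/-- Second-order growth of the two-group stratified pseudo-risk around the optimal
allocation: perturbing the optimal split by `Δ` increases the risk by the stated amounts. -/
theorem stmt18 (A B S n Δ : ℝ) (hA : 0 < A) (hB : 0 < B) (hS : S = A + B)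
    (hn : 0 < n) (hΔ : 0 < Δ) (hΔle : Δ ≤ n * B / (2 * S)) :
    (A ^ 2 / (n * A / S + Δ) + B ^ 2 / (n * B / S - Δ) - S ^ 2 / n
      ≥ (S ^ 2 / n) * ((S * Δ / (A * n)) * (S * Δ / (B * n)))
          / ((1 + S * Δ / (A * n)) * (1 - S * Δ / (B * n)))) ∧
    ((S ^ 2 / n) * ((S * Δ / (A * n)) * (S * Δ / (B * n)))
          / ((1 + S * Δ / (A * n)) * (1 - S * Δ / (B * n)))
      ≥ S ^ 4 * Δ ^ 2 / (4 * A * B * n ^ 3) * (1 / (1 + S * Δ / (A * n)))) := by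
  subst hS
  have hSpos : 0 < A + B := by linarith
  have hdA : 0 < n * A / (A + B) + Δ := by positivity
  have hle : Δ * (2 * (A + B)) ≤ n * B := (le_div_iff₀ (by positivity)).mp hΔle
  have hdB : 0 < n * B / (A + B) - Δ := by
    rw [sub_pos, lt_div_iff₀ hSpos]; nlinarith
  have hBn : 0 < B * n - (A + B) * Δ := by nlinarith
  have hAn : 0 < A * n + (A + B) * Δ := by positivity
  have hyp : 0 < 1 - (A + B) * Δ / (B * n) := by
    rw [sub_pos, div_lt_one (by positivity)]; nlinarith
  have hxp : 0 < 1 + (A + B) * Δ / (A * n) := by positivity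
  have e1 : ((A + B) ^ 2 / n) * (((A + B) * Δ / (A * n)) * ((A + B) * Δ / (B * n)))
          / ((1 + (A + B) * Δ / (A * n)) * (1 - (A + B) * Δ / (B * n)))
      = (A + B) ^ 4 * Δ ^ 2 / (n * (A * n + (A + B) * Δ) * (B * n - (A + B) * Δ)) := by
    rw [div_eq_div_iff (by positivity) (by positivity)]
    field_simp
  have e2 : (A + B) ^ 4 * Δ ^ 2 / (4 * A * B * n ^ 3) * (1 / (1 + (A + B) * Δ / (A * n)))
      = (A + B) ^ 4 * Δ ^ 2 / (4 * B * n ^ 2 * (A * n + (A + B) * Δ)) := by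
    rw [mul_one_div, div_div, div_eq_div_iff (by positivity) (by positivity)]
    field_simp
  constructor
  · apply ge_of_eq
    rw [e1]
    have eA : A ^ 2 / (n * A / (A + B) + Δ) = A ^ 2 * (A + B) / (A * n + (A + B) * Δ) := by
      rw [div_eq_div_iff (by positivity) (by positivity)]; field_simp
    have eB : B ^ 2 / (n * B / (A + B) - Δ) = B ^ 2 * (A + B) / (B * n - (A + B) * Δ) := by
      rw [div_eq_div_iff (by positivity) (by positivity)]; field_simp
    rw [eA, eB]
    field_simp
    ring
  · rw [e1, e2, ge_iff_le, div_le_div_iff₀ (by positivity) (by positivity)]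
    nlinarith [mul_pos (mul_pos (mul_pos (pow_pos hSpos 4) (pow_pos hΔ 2)) hAn)
      (mul_pos hn (by positivity : (0:ℝ) < 3 * B * n + (A + B) * Δ))]
end
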